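/- arXiv:1102.2039 — 2 statements merged into one kernel-verified Lean document; each statement's English description precedes it below -/
import Mathlib

section
/- For every C ∈ ch^q_F(A) with q ≥ 1, h_q > 0 on tilde(C) ∩ F^q; in particular, tilde(C) ∩ F^{q−1} = ∅. -/
open Set

namespace IY

/-- An affine hyperplane arrangement in `ℝ^ℓ`, given by `n` affine-linear forms
with nonzero linear parts; the `i`-th hyperplane is the zero set of `α i`. -/
structure Arrangement (ℓ n : ℕ) where
  α : Fin n → ((Fin ℓ → ℝ) →ᵃ[ℝ] ℝ)
  nonzero : ∀ i, (α i).linear ≠ 0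

namespace Arrangement

variable {ℓ n : ℕ} (A : Arrangement ℓ n)

/-- The hyperplane `H_i = {α_i = 0}`. -/
def H (i : Fin n) : Set (Fin ℓ → ℝ) := {x | A.α i x = 0}

/-- The real complement of the subarrangement indexed by `s`. -/
def compOn (s : Set (Fin n)) : Set (Fin ℓ → ℝ) := {x | ∀ i ∈ s, A.α i x ≠ 0}

/-- Chambers of the subarrangement indexed by `s` : connected components of its
real complement. -/
def IsChamberOn (s : Set (Fin n)) (C : Set (Fin ℓ → ℝ)) : Prop :=
  ∃ x ∈ A.compOn s, C = connectedComponentIn (A.compOn s) x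

/-- Chambers of the full arrangement. -/
def IsChamber (C : Set (Fin ℓ → ℝ)) : Prop := A.IsChamberOn Set.univ C

/-- The intersection poset of the subarrangement indexed by `s` : nonempty
intersections of subfamilies (the empty intersection giving `ℝ^ℓ`). -/
def LOn (s : Set (Fin n)) (X : Set (Fin ℓ → ℝ)) : Prop :=
  X.Nonempty ∧ ∃ t : Set (Fin n), t ⊆ s ∧ X = ⋂ i ∈ t, A.H i

/-- The intersection poset `L(A)`. -/
def L (X : Set (Fin ℓ → ℝ)) : Prop := A.LOn Set.univ X

/-- The real part of a point of `ℂ^ℓ`. -/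
def reP {ℓ : ℕ} (z : Fin ℓ → ℂ) : Fin ℓ → ℝ := fun j => (z j).re

/-- The imaginary part of a point of `ℂ^ℓ`. -/
def imP {ℓ : ℕ} (z : Fin ℓ → ℂ) : Fin ℓ → ℝ := fun j => (z j).im

/-- The point `x + iv` of `ℂ^ℓ`. -/
def mkC {ℓ : ℕ} (x v : Fin ℓ → ℝ) : Fin ℓ → ℂ := fun j => ⟨x j, v j⟩

/-- The complexified complement `M(A) = ℂ^ℓ \ ⋃ H_ℂ`; a point `x + iv` lies on
`H_ℂ = {α_ℂ = 0}` iff `α(x) = 0` and the linear part of `α` kills `v`. -/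
def M : Set (Fin ℓ → ℂ) :=
  {z | ∀ i : Fin n, ¬(A.α i (reP z) = 0 ∧ (A.α i).linear (imP z) = 0)}

end Arrangement

/-- Dimension of a subset of `ℝ^ℓ` (for affine subspaces, their dimension). -/
noncomputable def dimS {ℓ : ℕ} (X : Set (Fin ℓ → ℝ)) : ℕ :=
  Module.finrank ℝ (affineSpan ℝ X).direction

/-- The direction `τ(X)` of (the affine span of) a subset of `ℝ^ℓ`. -/
noncomputable def tau {ℓ : ℕ} (X : Set (Fin ℓ → ℝ)) : Submodule ℝ (Fin ℓ → ℝ) :=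
  (affineSpan ℝ X).direction

/-- A flag in `ℝ^ℓ` given by defining affine-linear forms `h_1, …, h_ℓ`
(0-indexed: `h j` is the form `h_{j+1}`). -/
structure Flag (ℓ : ℕ) where
  h : Fin ℓ → ((Fin ℓ → ℝ) →ᵃ[ℝ] ℝ)

namespace Flag

variable {ℓ : ℕ} (𝓕 : Flag ℓ)

/-- The flag subspace `F^q = {h_{q+1} = ⋯ = h_ℓ = 0}`. -/
def F (q : ℕ) : Set (Fin ℓ → ℝ) := {x | ∀ j : Fin ℓ, q ≤ (j : ℕ) → 𝓕.h j x = 0}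

/-- `𝓕.hq q` is the form `h_q` in 1-indexed notation (junk value `0` out of range). -/
noncomputable def hq (q : ℕ) : (Fin ℓ → ℝ) →ᵃ[ℝ] ℝ :=
  if hlt : q - 1 < ℓ then 𝓕.h ⟨q - 1, hlt⟩ else 0

end Flag

/-- Genericity of the flag: for every `X ∈ L(A)`, `F^q ∩ X` is an affine subspace
of dimension `q + dim X - ℓ`, empty when `q + dim X < ℓ`. -/
def GenericFlag {ℓ n : ℕ} (A : Arrangement ℓ n) (𝓕 : Flag ℓ) : Prop :=
  ∀ X, A.L X → ∀ q, q ≤ ℓ →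
    (ℓ ≤ q + dimS X →
      ∃ W : AffineSubspace ℝ (Fin ℓ → ℝ), (W : Set (Fin ℓ → ℝ)).Nonempty ∧
        (W : Set (Fin ℓ → ℝ)) = 𝓕.F q ∩ X ∧
        Module.finrank ℝ W.direction = q + dimS X - ℓ) ∧
    (q + dimS X < ℓ → 𝓕.F q ∩ X = ∅)

/-- Condition (1) of the Assumption, for the subarrangement indexed by `s`:
if a chamber `C` meets `F^q` but not `F^{q-1}`, then `h_q > 0` on `C ∩ F^q`. -/
def Cond1On {ℓ n : ℕ} (A : Arrangement ℓ n) (s : Set (Fin n)) (𝓕 : Flag ℓ) : Prop :=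
  ∀ q : ℕ, 1 ≤ q → q ≤ ℓ → ∀ C, A.IsChamberOn s C →
    (C ∩ 𝓕.F q).Nonempty → C ∩ 𝓕.F (q - 1) = ∅ →
    ∀ x ∈ C ∩ 𝓕.F q, 0 < 𝓕.hq q x

/-- Condition (2) of the Assumption, for the subarrangement indexed by `s`:
distinct `X, X'` in the intersection poset of dimension `ℓ - q` have different
`h_q`-values at their intersection points with `F^q`. -/
def Cond2On {ℓ n : ℕ} (A : Arrangement ℓ n) (s : Set (Fin n)) (𝓕 : Flag ℓ) : Prop :=
  ∀ q : ℕ, 1 ≤ q → q ≤ ℓ → ∀ X X', A.LOn s X → A.LOn s X' →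
    dimS X = ℓ - q → dimS X' = ℓ - q → X ≠ X' →
    ∀ p ∈ X ∩ 𝓕.F q, ∀ p' ∈ X' ∩ 𝓕.F q, 𝓕.hq q p ≠ 𝓕.hq q p'

/-- `C ∈ ch^q_F(A)` : `C` is a chamber meeting `F^q` but not `F^{q-1}`
(the latter condition being empty for `q = 0`, since `F^{-1} = ∅`). -/
def ChF {ℓ n : ℕ} (A : Arrangement ℓ n) (𝓕 : Flag ℓ) (q : ℕ)
    (C : Set (Fin ℓ → ℝ)) : Prop :=
  A.IsChamber C ∧ (C ∩ 𝓕.F q).Nonempty ∧ (q = 0 ∨ C ∩ 𝓕.F (q - 1) = ∅)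

/-- `X = X_C` for `C ∈ ch^q_F(A)` : `X ∈ L(A)` has dimension `ℓ - q` and meets
`F^q` exactly in the unique minimum point of `h_q` on the closure of `C ∩ F^q`. -/
def IsXC {ℓ n : ℕ} (A : Arrangement ℓ n) (𝓕 : Flag ℓ) (q : ℕ)
    (C X : Set (Fin ℓ → ℝ)) : Prop :=
  A.L X ∧ dimS X = ℓ - q ∧
  ∃ p : Fin ℓ → ℝ, X ∩ 𝓕.F q = {p} ∧ p ∈ closure (C ∩ 𝓕.F q) ∧
    ∀ y ∈ closure (C ∩ 𝓕.F q), 𝓕.hq q p ≤ 𝓕.hq q y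

/-- Indices of the hyperplanes parallel to `X`, i.e. `A_{[X]} = {H : τ(X) ⊆ τ(H)}`. -/
def parIdx {ℓ n : ℕ} (A : Arrangement ℓ n) (X : Set (Fin ℓ → ℝ)) : Set (Fin n) :=
  {i | tau X ≤ LinearMap.ker (A.α i).linear}

/-- `H_i ∈ Sep(C, C')` : the hyperplane `H_i` separates the chambers `C` and `C'`. -/
def SepCh {ℓ n : ℕ} (A : Arrangement ℓ n) (C C' : Set (Fin ℓ → ℝ)) (i : Fin n) : Prop :=
  ((∀ x ∈ C, 0 < A.α i x) ∧ (∀ y ∈ C', A.α i y < 0)) ∨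
  ((∀ x ∈ C, A.α i x < 0) ∧ (∀ y ∈ C', 0 < A.α i y))

/-- `H_i ∈ Sep(p₁, p₂)` : the hyperplane `H_i` meets the segment `[p₁, p₂]`. -/
def SepPt {ℓ n : ℕ} (A : Arrangement ℓ n) (p₁ p₂ : Fin ℓ → ℝ) (i : Fin n) : Prop :=
  ∃ w ∈ segment ℝ p₁ p₂, A.α i w = 0

/-- The piece `S(C)` attached to a chamber with `τ(X_C) = T` and base point `p`:
all `x + iv` with `v ∈ T` and `v ∉ τ(H)` for every `H ∈ Sep(p, x)`. -/
def S {ℓ n : ℕ} (A : Arrangement ℓ n) (T : Submodule ℝ (Fin ℓ → ℝ))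
    (p : Fin ℓ → ℝ) : Set (Fin ℓ → ℂ) :=
  {z | Arrangement.imP z ∈ T ∧
    ∀ i : Fin n, SepPt A p (Arrangement.reP z) i →
      (A.α i).linear (Arrangement.imP z) ≠ 0}

end IY

namespace IY
open Arrangement

variable {ℓ n : ℕ}

/-- The set of common zeros of a family of the defining forms, as an affine subspace. -/
noncomputable def zeroSub (A : Arrangement ℓ n) (t : Set (Fin n)) :
    AffineSubspace ℝ (Fin ℓ → ℝ) where
  carrier := {x | ∀ i ∈ t, A.α i x = 0}
  smul_vsub_vadd_mem' := by
    intro c p1 p2 p3 h1 h2 h3 i hi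
    show A.α i (c • (p1 -ᵥ p2) +ᵥ p3) = 0
    rw [AffineMap.map_vadd, LinearMap.map_smul, AffineMap.linearMap_vsub]
    simp only [vsub_eq_sub, vadd_eq_add, smul_eq_mul]
    rw [h1 i hi, h2 i hi, h3 i hi]; ring

lemma mem_zeroSub {A : Arrangement ℓ n} {t : Set (Fin n)} {x : Fin ℓ → ℝ} :
    x ∈ zeroSub A t ↔ ∀ i ∈ t, A.α i x = 0 := Iff.rfl

lemma zeroSub_coe (A : Arrangement ℓ n) (t : Set (Fin n)) :
    (zeroSub A t : Set (Fin ℓ → ℝ)) = ⋂ i ∈ t, A.H i := by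
  ext x
  simp only [SetLike.mem_coe, mem_zeroSub, Set.mem_iInter, Arrangement.H, Set.mem_setOf_eq]

lemma segment_sign (A : Arrangement ℓ n) {s : Set (Fin n)} {x₀ c z : Fin ℓ → ℝ}
    (hc : c ∈ connectedComponentIn (A.compOn s) x₀)
    (hz : ∀ i ∈ s, 0 < A.α i z * A.α i c) :
    z ∈ connectedComponentIn (A.compOn s) x₀ := by
  set seg : Set (Fin ℓ → ℝ) :=
    (AffineMap.lineMap c z : ℝ →ᵃ[ℝ] (Fin ℓ → ℝ)) '' Icc (0:ℝ) 1 with hseg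
  have hconn : IsPreconnected seg :=
    isPreconnected_Icc.image _
      ((AffineMap.lineMap c z : ℝ →ᵃ[ℝ] (Fin ℓ → ℝ)).continuous_of_finiteDimensional).continuousOn
  have hsub : seg ⊆ A.compOn s := by
    rintro _ ⟨t, ⟨ht0, ht1⟩, rfl⟩ i hi hzero
    rw [AffineMap.apply_lineMap] at hzero
    simp only [AffineMap.lineMap_apply, vsub_eq_sub, vadd_eq_add, smul_eq_mul] at hzero
    have h2a : (t * (A.α i z - A.α i c) + A.α i c) * A.α i c = 0 := by rw [hzero]; ring
    have h2b : (t * (A.α i z - A.α i c) + A.α i c) * A.α i z = 0 := by rw [hzero]; ring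
    nlinarith [hz i hi, mul_nonneg (sub_nonneg.2 ht1) (sq_nonneg (A.α i c)),
      mul_nonneg ht0 (sq_nonneg (A.α i z))]
  have hcseg : c ∈ seg := ⟨0, ⟨le_refl _, zero_le_one⟩, by simp⟩
  have hzseg : z ∈ seg := ⟨1, ⟨zero_le_one, le_refl _⟩, by simp⟩
  have := hconn.subset_connectedComponentIn hcseg hsub
  have hz' : z ∈ connectedComponentIn (A.compOn s) c := this hzseg
  have heq := connectedComponentIn_eq hc
  first | exact heq ▸ hz' | exact heq.symm ▸ hz'

lemma sign_const (A : Arrangement ℓ n) {s : Set (Fin n)} {x₀ c z : Fin ℓ → ℝ}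
    (hc : c ∈ connectedComponentIn (A.compOn s) x₀)
    (hz : z ∈ connectedComponentIn (A.compOn s) x₀)
    {i : Fin n} (hi : i ∈ s) : 0 < A.α i z * A.α i c := by
  set D := connectedComponentIn (A.compOn s) x₀ with hD
  have hpre : IsPreconnected D := isPreconnected_connectedComponentIn
  have hsub : D ⊆ A.compOn s := connectedComponentIn_subset _ _
  have hcont : Continuous (A.α i) := (A.α i).continuous_of_finiteDimensional
  have hcover : D ⊆ {x | 0 < A.α i x} ∪ {x | A.α i x < 0} := by
    intro x hx
    rcases lt_or_gt_of_ne (hsub hx i hi) with h | h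
    · exact Or.inr h
    · exact Or.inl h
  have hopen1 : IsOpen {x : Fin ℓ → ℝ | 0 < A.α i x} := isOpen_lt continuous_const hcont
  have hopen2 : IsOpen {x : Fin ℓ → ℝ | A.α i x < 0} := isOpen_lt hcont continuous_const
  have hdisj : Disjoint {x : Fin ℓ → ℝ | 0 < A.α i x} {x | A.α i x < 0} := by
    rw [Set.disjoint_left]
    intro x h1 h2
    have h1' : 0 < A.α i x := h1
    have h2' : A.α i x < 0 := h2
    linarith
  rcases hpre.subset_or_subset hopen1 hopen2 hdisj hcover with h | h
  · exact mul_pos (h hz) (h hc)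
  · exact mul_pos_of_neg_of_neg (h hz) (h hc)

/-- Key fact: no hyperplane not parallel to `X` passes through the point `p = X ∩ F^q`. -/
lemma alpha_ne_zero_at (A : Arrangement ℓ n) (𝓕 : Flag ℓ) (hgen : GenericFlag A 𝓕)
    {q : ℕ} (hq2 : q ≤ ℓ) {X : Set (Fin ℓ → ℝ)} (hLX : A.L X) (hdim : dimS X = ℓ - q)
    {p : Fin ℓ → ℝ} (hpX : p ∈ X) (hpF : p ∈ 𝓕.F q)
    {i : Fin n} (hi : i ∉ parIdx A X) : A.α i p ≠ 0 := by
  intro h0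
  obtain ⟨hne, t, -, hXeq⟩ := hLX
  have hXc : X = (zeroSub A t : Set (Fin ℓ → ℝ)) := by rw [hXeq, zeroSub_coe]
  -- X is not contained in H i
  have hwit : ∃ x ∈ X, A.α i x ≠ 0 := by
    by_contra hcon
    push_neg at hcon
    apply hi
    show tau X ≤ LinearMap.ker (A.α i).linear
    rw [tau, direction_affineSpan, vectorSpan_def]
    rw [Submodule.span_le]
    rintro v hv
    rw [Set.mem_vsub] at hv
    obtain ⟨x, hx, y, hy, rfl⟩ := hv
    have : (A.α i).linear (x -ᵥ y) = A.α i x -ᵥ A.α i y := AffineMap.linearMap_vsub _ _ _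
    rw [SetLike.mem_coe, LinearMap.mem_ker, this, hcon x hx, hcon y hy, vsub_self]
  obtain ⟨x, hxX, hxne⟩ := hwit
  -- the smaller intersection
  set T : Set (Fin n) := insert i t with hT
  have hle : zeroSub A T ≤ zeroSub A t := by
    intro w hw j hj
    exact hw j (Set.mem_insert_of_mem i hj)
  have hpT : p ∈ zeroSub A T := by
    intro j hj
    rcases Set.mem_insert_iff.1 hj with rfl | hj
    · exact h0
    · have : p ∈ zeroSub A t := by rw [← SetLike.mem_coe, ← hXc]; exact hpX
      exact this j hj
  have hxt : x ∈ zeroSub A t := by rw [← SetLike.mem_coe, ← hXc]; exact hxX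
  have hlt : zeroSub A T < zeroSub A t := by
    refine lt_of_le_of_ne hle (fun heq => ?_)
    have : x ∈ zeroSub A T := by rw [heq]; exact hxt
    exact hxne (this i (Set.mem_insert i t))
  have hdirlt : (zeroSub A T).direction < (zeroSub A t).direction :=
    AffineSubspace.direction_lt_of_nonempty hlt ⟨p, hpT⟩
  have hrank : Module.finrank ℝ (zeroSub A T).direction
      < Module.finrank ℝ (zeroSub A t).direction :=
    Submodule.finrank_lt_finrank_of_lt hdirlt
  -- identify dims
  have hdimX : dimS X = Module.finrank ℝ (zeroSub A t).direction := by
    rw [hXc, dimS, AffineSubspace.affineSpan_coe]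
  have hdimY : dimS (zeroSub A T : Set (Fin ℓ → ℝ))
      = Module.finrank ℝ (zeroSub A T).direction := by
    rw [dimS, AffineSubspace.affineSpan_coe]
  -- the smaller intersection is in L(A)
  have hLY : A.L (zeroSub A T : Set (Fin ℓ → ℝ)) :=
    ⟨⟨p, hpT⟩, T, Set.subset_univ _, (zeroSub_coe A T)⟩
  have hsmall : q + dimS (zeroSub A T : Set (Fin ℓ → ℝ)) < ℓ := by
    rw [hdimY]
    rw [hdimX] at hdim
    omega
  have hempty := (hgen _ hLY q hq2).2 hsmall
  have : p ∈ 𝓕.F q ∩ (zeroSub A T : Set (Fin ℓ → ℝ)) := ⟨hpF, hpT⟩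
  rw [hempty] at this
  exact this

/-- For `C ∈ ch^q_F(A)` with `q ≥ 1`, `h_q > 0` on
`tilde(C) ∩ F^q`; in particular `tilde(C) ∩ F^{q-1} = ∅`. -/
theorem hq_pos_on_tilde (ℓ n : ℕ) (A : Arrangement ℓ n) (𝓕 : Flag ℓ)
    (hind : LinearIndependent ℝ fun j : Fin ℓ => (𝓕.h j).linear)
    (hgen : GenericFlag A 𝓕)
    (h1 : Cond1On A Set.univ 𝓕) (h2 : Cond2On A Set.univ 𝓕)
    (q : ℕ) (hq1 : 1 ≤ q) (hq2 : q ≤ ℓ)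
    (C X : Set (Fin ℓ → ℝ))
    (hC : ChF A 𝓕 q C) (hX : IsXC A 𝓕 q C X)
    (Ct : Set (Fin ℓ → ℝ)) (hCt : A.IsChamberOn (parIdx A X) Ct) (hCCt : C ⊆ Ct) :
    (∀ x ∈ Ct ∩ 𝓕.F q, 0 < 𝓕.hq q x) ∧ Ct ∩ 𝓕.F (q - 1) = ∅ := by
  obtain ⟨hCch, hCF, hCF1⟩ := hC
  have hCF1' : C ∩ 𝓕.F (q-1) = ∅ := hCF1.resolve_left (by omega)
  obtain ⟨hLX, hdimX, p, hXFq, hpcl, hpmin⟩ := hX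
  obtain ⟨x₀, hx₀, hCeq⟩ := hCch
  obtain ⟨x₁, hx₁, hCteq⟩ := hCt
  obtain ⟨c, hcC, hcF⟩ := hCF
  have hlt : q - 1 < ℓ := by omega
  have hqdef : 𝓕.hq q = 𝓕.h ⟨q-1, hlt⟩ := dif_pos hlt
  have hcontq : Continuous (𝓕.hq q) := by
    rw [hqdef]; exact (𝓕.h _).continuous_of_finiteDimensional
  have hpXF : p ∈ X ∩ 𝓕.F q := by rw [hXFq]; exact rfl
  have hpX : p ∈ X := hpXF.1
  have hpFq : p ∈ 𝓕.F q := hpXF.2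
  -- h_q > 0 on C ∩ F^q
  have hpos := h1 q hq1 hq2 C ⟨x₀, hx₀, hCeq⟩ ⟨c, hcC, hcF⟩ hCF1'
  -- h_q p ≥ 0
  have hp0 : 0 ≤ 𝓕.hq q p := by
    have hcl : closure (C ∩ 𝓕.F q) ⊆ {x | 0 ≤ 𝓕.hq q x} :=
      closure_minimal (fun x hx => le_of_lt (hpos x hx))
        (isClosed_le continuous_const hcontq)
    exact hcl hpcl
  -- h_q p ≠ 0
  have hpne : 𝓕.hq q p ≠ 0 := by
    intro h0
    have hpF1 : p ∈ 𝓕.F (q-1) := by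
      intro j hj
      rcases eq_or_lt_of_le hj with h | h
      · have hje : j = (⟨q-1, hlt⟩ : Fin ℓ) := Fin.ext h.symm
        rw [hje, ← hqdef]; exact h0
      · exact hpFq j (by omega)
    have hgenX : 𝓕.F (q-1) ∩ X = ∅ :=
      (hgen X hLX (q-1) (by omega)).2 (by rw [hdimX]; omega)
    have : p ∈ 𝓕.F (q-1) ∩ X := ⟨hpF1, hpX⟩
    rw [hgenX] at this
    exact this
  have hppos : 0 < 𝓕.hq q p := lt_of_le_of_ne hp0 (Ne.symm hpne)
  -- sign facts
  have hsignC : ∀ x ∈ C, ∀ i : Fin n, 0 < A.α i x * A.α i c := by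
    intro x hx i
    rw [hCeq] at hx hcC
    exact sign_const A hcC hx (Set.mem_univ i)
  have hsignP : ∀ i : Fin n, 0 ≤ A.α i p * A.α i c := by
    intro i
    have hclC : p ∈ closure C := closure_mono Set.inter_subset_left hpcl
    have hcl : closure C ⊆ {x | 0 ≤ A.α i x * A.α i c} :=
      closure_minimal (fun x hx => (hsignC x hx i).le)
        (isClosed_le continuous_const
          ((A.α i).continuous_of_finiteDimensional.mul continuous_const))
    exact hcl hclC
  have hsignPne : ∀ i : Fin n, i ∉ parIdx A X → 0 < A.α i p * A.α i c := by
    intro i hi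
    rcases (hsignP i).lt_or_eq with h | h
    · exact h
    · exfalso
      have hane := alpha_ne_zero_at A 𝓕 hgen hq2 hLX hdimX hpX hpFq hi
      have hcne : A.α i c ≠ 0 := by
        rw [hCeq] at hcC
        exact connectedComponentIn_subset _ _ hcC i (Set.mem_univ i)
      rcases mul_eq_zero.1 h.symm with h' | h'
      · exact hane h'
      · exact hcne h'
  have hcCt : c ∈ Ct := hCCt hcC
  -- the key inequality
  have key : ∀ y ∈ Ct ∩ 𝓕.F q, 𝓕.hq q p ≤ 𝓕.hq q y := by
    rintro y ⟨hyCt, hyF⟩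
    have hsignY : ∀ i ∈ parIdx A X, 0 < A.α i y * A.α i c := by
      intro i hi
      rw [hCteq] at hyCt hcCt
      exact sign_const A hcCt hyCt hi
    -- eventually the segment point lies in C
    have hforall : ∀ i : Fin n, ∀ᶠ t in nhdsWithin (0:ℝ) (Set.Ioi 0),
        0 < A.α i (AffineMap.lineMap p y t) * A.α i c := by
      intro i
      by_cases hi : i ∈ parIdx A X
      · filter_upwards [Ioc_mem_nhdsGT zero_lt_one] with t ht
        rw [AffineMap.apply_lineMap]
        simp only [AffineMap.lineMap_apply, vsub_eq_sub, vadd_eq_add, smul_eq_mul]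
        have h1' := hsignP i
        have h2' := hsignY i hi
        nlinarith [ht.1, ht.2]
      · have hco : ContinuousAt
            (fun t : ℝ => A.α i (AffineMap.lineMap p y t) * A.α i c) 0 := by
          apply Continuous.continuousAt
          exact ((A.α i).continuous_of_finiteDimensional.comp
            (AffineMap.lineMap p y : ℝ →ᵃ[ℝ] (Fin ℓ → ℝ)).continuous_of_finiteDimensional).mul
            continuous_const
        have hev : ∀ᶠ t in nhds (0:ℝ),
            0 < A.α i (AffineMap.lineMap p y t) * A.α i c := by
          have := hco.eventually_mem (s := Set.Ioi (0:ℝ))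
            (isOpen_Ioi.mem_nhds (by simpa using hsignPne i hi))
          filter_upwards [this] with t ht using ht
        exact hev.filter_mono nhdsWithin_le_nhds
    have hall : ∀ᶠ t in nhdsWithin (0:ℝ) (Set.Ioi 0),
        ∀ i : Fin n, 0 < A.α i (AffineMap.lineMap p y t) * A.α i c :=
      Filter.eventually_all.2 hforall
    have hpos' : ∀ᶠ t in nhdsWithin (0:ℝ) (Set.Ioi 0), (0:ℝ) < t :=
      self_mem_nhdsWithin
    obtain ⟨t, htC, ht0⟩ := (hall.and hpos').exists
    -- the segment point is in C
    have hmemC : AffineMap.lineMap p y t ∈ C := by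
      rw [hCeq] at hcC ⊢
      exact segment_sign A hcC (fun i _ => htC i)
    -- and in F^q
    have hmemF : AffineMap.lineMap p y t ∈ 𝓕.F q := by
      intro j hj
      rw [AffineMap.apply_lineMap, hpFq j hj, hyF j hj]
      simp
    have hmin := hpmin _ (subset_closure ⟨hmemC, hmemF⟩)
    rw [AffineMap.apply_lineMap] at hmin
    simp only [AffineMap.lineMap_apply, vsub_eq_sub, vadd_eq_add, smul_eq_mul] at hmin
    nlinarith [hmin, ht0]
  constructor
  · intro x hx
    exact lt_of_lt_of_le hppos (key x hx)
  · rw [Set.eq_empty_iff_forall_notMem]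
    rintro x ⟨hxCt, hxF1⟩
    have hxFq : x ∈ 𝓕.F q := fun j hj => hxF1 j (by omega)
    have hgt := lt_of_lt_of_le hppos (key x ⟨hxCt, hxFq⟩)
    have hzero : 𝓕.hq q x = 0 := by
      rw [hqdef]
      exact hxF1 ⟨q-1, hlt⟩ (le_refl _)
    rw [hzero] at hgt
    exact lt_irrefl 0 hgt


end IY
end

section
/- For every point x + iv ∈ M(A) (x, v ∈ ℝ^ℓ), let A_{[v]} = {H ∈ A : v ∈ τ(H)}. Then x does not lie on any H ∈ A_{[v]}, and if D is the chamber of the subarrangement A_{[v]} containing x and q = min{ i : D ∩ F^i ≠ ∅ }, then there exists a chamber C ∈ ch^q_F(A) with C ⊆ D such that x + iv ∈ S(C). -/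
open Set

namespace IY

section Aux

variable {ℓ n : ℕ}

lemma apply_add (f : (Fin ℓ → ℝ) →ᵃ[ℝ] ℝ) (y w : Fin ℓ → ℝ) :
    f (y + w) = f y + f.linear w := by
  have h := f.map_vadd y w
  simp only [vadd_eq_add] at h
  rw [add_comm] at h
  rw [h, add_comm]

lemma affine_continuous (f : (Fin ℓ → ℝ) →ᵃ[ℝ] ℝ) : Continuous f :=
  AffineMap.continuous_of_finiteDimensional f

/-- The sign cell of a point w.r.t. a subarrangement. -/
def cell (A : Arrangement ℓ n) (s : Set (Fin n)) (x₀ : Fin ℓ → ℝ) : Set (Fin ℓ → ℝ) :=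
  {y | ∀ i ∈ s, 0 < A.α i x₀ * A.α i y}

lemma affine_comb (f : (Fin ℓ → ℝ) →ᵃ[ℝ] ℝ) (y z : Fin ℓ → ℝ) (t : ℝ) :
    f (y + t • (z - y)) = f y + t * (f z - f y) := by
  rw [apply_add, map_smul]
  have h : f.linear (z - y) = f z - f y := by
    have h2 := f.linearMap_vsub z y
    simpa [vsub_eq_sub] using h2
  rw [h, smul_eq_mul]

lemma cell_convex (A : Arrangement ℓ n) (s : Set (Fin n)) (x₀ : Fin ℓ → ℝ) :
    Convex ℝ (cell A s x₀) := by
  rw [convex_iff_segment_subset]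
  intro y hy z hz w hw
  rw [segment_eq_image_lineMap] at hw
  obtain ⟨t, ht, rfl⟩ := hw
  intro i hi
  have h1 := hy i hi
  have h2 := hz i hi
  have hval : A.α i (AffineMap.lineMap y z t) = A.α i y + t * (A.α i z - A.α i y) := by
    rw [AffineMap.apply_lineMap]
    simp [AffineMap.lineMap_apply_module]
    ring
  rw [hval]
  obtain ⟨ht0, ht1⟩ := ht
  rcases lt_or_ge t 1 with ht1' | ht1'
  · nlinarith [mul_pos (by linarith : (0:ℝ) < 1 - t) h1, mul_nonneg ht0 h2.le]
  · have ht : t = 1 := le_antisymm ht1 ht1'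
    have he : A.α i y + t * (A.α i z - A.α i y) = A.α i z := by rw [ht]; ring
    rw [he]; exact h2

lemma cell_isOpen (A : Arrangement ℓ n) (s : Set (Fin n)) (x₀ : Fin ℓ → ℝ) :
    IsOpen (cell A s x₀) := by
  have h : cell A s x₀ = ⋂ i ∈ s, {y | 0 < A.α i x₀ * A.α i y} := by
    ext y; simp [cell]
  rw [h]
  exact Set.Finite.isOpen_biInter (Set.toFinite s) fun i _ =>
    isOpen_lt continuous_const (continuous_const.mul (affine_continuous (A.α i)))

lemma cell_self {A : Arrangement ℓ n} {s : Set (Fin n)} {x₀ : Fin ℓ → ℝ}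
    (hx₀ : x₀ ∈ A.compOn s) : x₀ ∈ cell A s x₀ :=
  fun i hi => mul_self_pos.mpr (hx₀ i hi)

lemma cell_subset_compOn (A : Arrangement ℓ n) (s : Set (Fin n)) (x₀ : Fin ℓ → ℝ) :
    cell A s x₀ ⊆ A.compOn s := by
  intro y hy i hi
  intro h0
  have := hy i hi
  rw [h0, mul_zero] at this
  exact lt_irrefl _ this

lemma connectedComponentIn_eq_cell (A : Arrangement ℓ n) (s : Set (Fin n)) {x₀ : Fin ℓ → ℝ}
    (hx₀ : x₀ ∈ A.compOn s) :
    connectedComponentIn (A.compOn s) x₀ = cell A s x₀ := by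
  apply Set.Subset.antisymm
  · set U := cell A s x₀ with hU
    set Vb := ⋃ i ∈ s, {y | A.α i x₀ * A.α i y < 0} with hV
    have hUo : IsOpen U := cell_isOpen A s x₀
    have hVo : IsOpen Vb := isOpen_biUnion fun i _ =>
      isOpen_lt (continuous_const.mul (affine_continuous (A.α i))) continuous_const
    have hdis : Disjoint U Vb := by
      rw [Set.disjoint_left]
      intro y hyU hyV
      simp only [hV, Set.mem_iUnion, Set.mem_setOf_eq] at hyV
      obtain ⟨i, hi, hlt⟩ := hyV
      exact absurd (hyU i hi) (not_lt.mpr (le_of_lt hlt))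
    have hsub : connectedComponentIn (A.compOn s) x₀ ⊆ U ∪ Vb := by
      intro y hy
      have hyc : y ∈ A.compOn s := connectedComponentIn_subset _ _ hy
      by_cases hU' : ∀ i ∈ s, 0 < A.α i x₀ * A.α i y
      · exact Or.inl hU'
      · push_neg at hU'
        obtain ⟨i, hi, hle⟩ := hU'
        have hne : A.α i x₀ * A.α i y ≠ 0 := mul_ne_zero (hx₀ i hi) (hyc i hi)
        refine Or.inr ?_
        simp only [hV, Set.mem_iUnion, Set.mem_setOf_eq]
        exact ⟨i, hi, lt_of_le_of_ne hle hne⟩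
    have hmeet : (connectedComponentIn (A.compOn s) x₀ ∩ U).Nonempty :=
      ⟨x₀, mem_connectedComponentIn hx₀, cell_self hx₀⟩
    exact IsPreconnected.subset_left_of_subset_union hUo hVo hdis hsub hmeet
      isPreconnected_connectedComponentIn
  · exact ((cell_convex A s x₀).isPreconnected).subset_connectedComponentIn
      (cell_self hx₀) (cell_subset_compOn A s x₀)

lemma exists_forall_ne (V₀ : Submodule ℝ (Fin ℓ → ℝ)) (f : Fin n → ((Fin ℓ → ℝ) →ₗ[ℝ] ℝ))
    (hf : ∀ i, ∃ w ∈ V₀, f i w ≠ 0) : ∃ u ∈ V₀, ∀ i, f i u ≠ 0 := by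
  suffices hFS : ∀ F : Finset (Fin n), ∃ u ∈ V₀, ∀ i ∈ F, f i u ≠ 0 by
    obtain ⟨u, hu, h⟩ := hFS Finset.univ
    exact ⟨u, hu, fun i => h i (Finset.mem_univ i)⟩
  intro F
  induction F using Finset.induction_on with
  | empty => exact ⟨0, zero_mem _, by simp⟩
  | @insert a F ha IH =>
    obtain ⟨u, huV, hu⟩ := IH
    obtain ⟨w, hwV, hw⟩ := hf a
    by_cases hau : f a u = 0
    · classical
      set bad : Finset ℝ := insert 0 (F.image fun i => -(f i u) / (f i w)) with hbad
      obtain ⟨cv, hcv⟩ : ∃ cv : ℝ, cv ∉ bad := by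
        obtain ⟨cv, hcv⟩ := (bad.finite_toSet.infinite_compl).nonempty
        exact ⟨cv, hcv⟩
      refine ⟨u + cv • w, add_mem huV (Submodule.smul_mem _ _ hwV), ?_⟩
      intro i hi
      rcases Finset.mem_insert.mp hi with rfl | hiF
      · rw [map_add, hau, map_smul, zero_add, smul_eq_mul]
        exact mul_ne_zero (fun h0 => hcv (by rw [h0]; exact Finset.mem_insert_self _ _)) hw
      · intro h0
        rw [map_add, map_smul, smul_eq_mul] at h0
        by_cases hfw : f i w = 0
        · rw [hfw, mul_zero, add_zero] at h0
          exact hu i hiF h0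
        · apply hcv
          apply Finset.mem_insert_of_mem
          apply Finset.mem_image.mpr
          refine ⟨i, hiF, ?_⟩
          field_simp
          linarith [h0]
    · exact ⟨u, huV, fun i hi => by
        rcases Finset.mem_insert.mp hi with rfl | hiF
        · exact hau
        · exact hu i hiF⟩

lemma dimS_univ : dimS (Set.univ : Set (Fin ℓ → ℝ)) = ℓ := by
  unfold dimS
  rw [AffineSubspace.span_univ, AffineSubspace.direction_top, finrank_top, Module.finrank_pi]
  simp

lemma ell_pos (A : Arrangement ℓ n) (i : Fin n) : 1 ≤ ℓ := by
  by_contra h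
  have hℓ : ℓ = 0 := by omega
  apply A.nonzero i
  subst hℓ
  apply LinearMap.ext
  intro x
  have hx : x = 0 := Subsingleton.elim x 0
  rw [hx, map_zero]
  rfl

lemma exists_H_pt (A : Arrangement ℓ n) (i : Fin n) : ∃ p₀, A.α i p₀ = 0 := by
  obtain ⟨w, hw⟩ := DFunLike.ne_iff.mp (A.nonzero i)
  have hw' : (A.α i).linear w ≠ 0 := by simpa using hw
  refine ⟨(0 : Fin ℓ → ℝ) + ((-(A.α i 0)) / ((A.α i).linear w)) • w, ?_⟩
  rw [apply_add, map_smul, smul_eq_mul, div_mul_cancel₀ _ hw']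
  ring

lemma H_eq_mk' (A : Arrangement ℓ n) (i : Fin n) {p₀ : Fin ℓ → ℝ} (hp₀ : A.α i p₀ = 0) :
    A.H i = (AffineSubspace.mk' p₀ (LinearMap.ker (A.α i).linear) : Set (Fin ℓ → ℝ)) := by
  ext y
  simp only [Arrangement.H, Set.mem_setOf_eq, SetLike.mem_coe,
    AffineSubspace.mem_mk', LinearMap.mem_ker, vsub_eq_sub]
  have hy : A.α i y = A.α i p₀ + (A.α i).linear (y - p₀) := by
    have h := apply_add (A.α i) p₀ (y - p₀)
    rw [add_sub_cancel] at h
    exact h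
  rw [hy, hp₀, zero_add]

lemma H_nonempty (A : Arrangement ℓ n) (i : Fin n) : (A.H i).Nonempty := by
  obtain ⟨p₀, hp₀⟩ := exists_H_pt A i
  exact ⟨p₀, hp₀⟩

lemma dimS_H (A : Arrangement ℓ n) (i : Fin n) : dimS (A.H i) = ℓ - 1 := by
  obtain ⟨p₀, hp₀⟩ := exists_H_pt A i
  unfold dimS
  rw [H_eq_mk' A i hp₀, AffineSubspace.affineSpan_coe, AffineSubspace.direction_mk']
  have hsurj : LinearMap.range (A.α i).linear = ⊤ := by
    rw [LinearMap.range_eq_top]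
    intro cv
    obtain ⟨w, hw⟩ := DFunLike.ne_iff.mp (A.nonzero i)
    have hw' : (A.α i).linear w ≠ 0 := by simpa using hw
    exact ⟨(cv / ((A.α i).linear w)) • w, by rw [map_smul, smul_eq_mul, div_mul_cancel₀ _ hw']⟩
  have hrk := LinearMap.finrank_range_add_finrank_ker (A.α i).linear
  rw [hsurj, finrank_top, Module.finrank_self, Module.finrank_pi] at hrk
  simp at hrk
  omega

lemma eq_of_finrank_zero {W : AffineSubspace ℝ (Fin ℓ → ℝ)}
    (hW : Module.finrank ℝ W.direction = 0) {p y : Fin ℓ → ℝ}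
    (hp : p ∈ W) (hy : y ∈ W) : y = p := by
  have hbot : W.direction = ⊥ := Submodule.finrank_eq_zero.mp hW
  have hmem := AffineSubspace.vsub_mem_direction hy hp
  rw [hbot, Submodule.mem_bot, vsub_eq_sub, sub_eq_zero] at hmem
  exact hmem

lemma F_closed (𝓕 : Flag ℓ) (q : ℕ) : IsClosed (𝓕.F q) := by
  have h : 𝓕.F q = ⋂ j : Fin ℓ, {x | q ≤ (j : ℕ) → 𝓕.h j x = 0} := by
    ext x; simp [Flag.F]
  rw [h]
  refine isClosed_iInter fun j => ?_
  by_cases hj : q ≤ (j : ℕ)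
  · have : {x : Fin ℓ → ℝ | q ≤ (j:ℕ) → 𝓕.h j x = 0} = {x | 𝓕.h j x = 0} := by
      ext x; simp [hj]
    rw [this]
    exact isClosed_eq (affine_continuous (𝓕.h j)) continuous_const
  · have : {x : Fin ℓ → ℝ | q ≤ (j:ℕ) → 𝓕.h j x = 0} = Set.univ := by
      ext x; simp [hj]
    rw [this]
    exact isClosed_univ

lemma F_mono (𝓕 : Flag ℓ) {q q' : ℕ} (h : q ≤ q') : 𝓕.F q ⊆ 𝓕.F q' :=
  fun x hx j hj => hx j (le_trans h hj)

lemma hq_eq (𝓕 : Flag ℓ) {q : ℕ} (h : q - 1 < ℓ) : 𝓕.hq q = 𝓕.h ⟨q - 1, h⟩ := dif_pos h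

lemma mem_F_pred (𝓕 : Flag ℓ) {q : ℕ} (h1 : 1 ≤ q) (hlt : q - 1 < ℓ) (x : Fin ℓ → ℝ) :
    x ∈ 𝓕.F (q - 1) ↔ x ∈ 𝓕.F q ∧ 𝓕.h ⟨q - 1, hlt⟩ x = 0 := by
  constructor
  · intro hx
    exact ⟨fun j hj => hx j (by omega), hx ⟨q - 1, hlt⟩ (by simp)⟩
  · rintro ⟨hx, h0⟩ j hj
    by_cases hqj : q ≤ (j : ℕ)
    · exact hx j hqj
    · have hje : (j : ℕ) = q - 1 := by omega
      have : j = ⟨q - 1, hlt⟩ := Fin.ext hje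
      rw [this]
      exact h0

lemma lp_aux (d : ℕ) : ∀ {ι : Type} [Finite ι] (g : ι → ((Fin ℓ → ℝ) →ᵃ[ℝ] ℝ))
    (h : (Fin ℓ → ℝ) →ᵃ[ℝ] ℝ) (c : ℝ),
    {x : Fin ℓ → ℝ | ∀ k, 0 ≤ g k x}.Nonempty →
    (∀ x ∈ {x : Fin ℓ → ℝ | ∀ k, 0 ≤ g k x}, c ≤ h x) →
    Module.finrank ℝ (affineSpan ℝ {x : Fin ℓ → ℝ | ∀ k, 0 ≤ g k x}).direction ≤ d →
    ∃ p ∈ {x : Fin ℓ → ℝ | ∀ k, 0 ≤ g k x},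
      ∀ y ∈ {x : Fin ℓ → ℝ | ∀ k, 0 ≤ g k x}, h p ≤ h y := by
  induction d with
  | zero =>
    intro ι _ g h c hne hb hd
    obtain ⟨x₀, hx₀⟩ := hne
    refine ⟨x₀, hx₀, fun y hy => ?_⟩
    have hy0 : y = x₀ := by
      refine eq_of_finrank_zero (Nat.le_zero.mp hd) ?_ ?_
      · exact subset_affineSpan ℝ _ hx₀
      · exact subset_affineSpan ℝ _ hy
    rw [hy0]
  | succ d IH =>
    intro ι _ g h c hne hb hd
    classical
    haveI : Fintype ι := Fintype.ofFinite ι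
    set K := {x : Fin ℓ → ℝ | ∀ k, 0 ≤ g k x} with hK
    by_cases hcst : ∀ a ∈ K, ∀ b ∈ K, h a = h b
    · obtain ⟨x₀, hx₀⟩ := hne
      exact ⟨x₀, hx₀, fun y hy => le_of_eq (hcst x₀ hx₀ y hy)⟩
    · push_neg at hcst
      obtain ⟨a0, ha0, b0, hb0, hne0⟩ := hcst
      obtain ⟨a, ha, b, hbK, hba⟩ : ∃ a ∈ K, ∃ b ∈ K, h b < h a := by
        rcases lt_or_gt_of_ne hne0 with h' | h'
        · exact ⟨b0, hb0, a0, ha0, h'⟩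
        · exact ⟨a0, ha0, b0, hb0, h'⟩
      set u := b - a with hu
      have hexp : ∀ (f : (Fin ℓ → ℝ) →ᵃ[ℝ] ℝ) (w : Fin ℓ → ℝ) (t : ℝ),
          f (w + t • u) = f w + t * f.linear u := by
        intro f w t
        rw [apply_add, map_smul, smul_eq_mul]
      have hulin : h.linear u = h b - h a := by
        have h2 := h.linearMap_vsub b a
        rw [vsub_eq_sub, vsub_eq_sub] at h2
        rw [hu]
        exact h2
      have huneg : h.linear u < 0 := by rw [hulin]; linarith
      have huDir : u ∈ (affineSpan ℝ K).direction := by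
        have := AffineSubspace.vsub_mem_direction (subset_affineSpan ℝ _ hbK)
          (subset_affineSpan ℝ _ ha)
        simpa [vsub_eq_sub] using this
      -- key ray lemma
      have key : ∀ y ∈ K, ∃ y' ∈ K, h y' ≤ h y ∧
          ∃ k, (g k).linear u < 0 ∧ g k y' = 0 := by
        intro y hy
        set T := {t : ℝ | 0 ≤ t ∧ y + t • u ∈ K} with hT
        have hT0 : (0 : ℝ) ∈ T := ⟨le_refl _, by simpa using hy⟩
        have hTclosed : IsClosed T := by
          have hTeq : T = {t : ℝ | 0 ≤ t} ∩ ⋂ k, {t : ℝ | 0 ≤ g k (y + t • u)} := by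
            ext t
            constructor
            · rintro ⟨h1, h2⟩
              exact ⟨h1, Set.mem_iInter.mpr fun k => h2 k⟩
            · rintro ⟨h1, h2⟩
              exact ⟨h1, fun k => Set.mem_iInter.mp h2 k⟩
          rw [hTeq]
          refine IsClosed.inter (isClosed_le continuous_const continuous_id) ?_
          refine isClosed_iInter fun k => ?_
          have hc : Continuous fun t : ℝ => g k (y + t • u) :=
            (affine_continuous (g k)).comp (continuous_const.add (continuous_id.smul continuous_const))
          exact isClosed_le continuous_const hc
        have hTconv : Convex ℝ T := by
          intro t1 ht1 t2 ht2 av bv hav hbv habv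
          constructor
          · have := ht1.1; have := ht2.1
            simp only [smul_eq_mul]
            nlinarith
          · intro k
            have h1 := ht1.2 k
            have h2 := ht2.2 k
            rw [hexp] at h1 h2 ⊢
            simp only [smul_eq_mul]
            have hav1 : av = 1 - bv := by linarith
            subst hav1
            nlinarith [mul_nonneg hav h1, mul_nonneg hbv h2]
        have hTbdd : BddAbove T := by
          by_contra hub
          have hyc : c ≤ h y := hb y hy
          set t₁ := (c - 1 - h y) / h.linear u with ht₁
          have ht₁pos : 0 < t₁ := div_pos_of_neg_of_neg (by linarith) huneg
          obtain ⟨t₂, ht₂T, ht₂⟩ : ∃ t₂ ∈ T, t₁ < t₂ := by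
            rcases not_bddAbove_iff.mp hub t₁ with ⟨t₂, h₂, h₂'⟩
            exact ⟨t₂, h₂, h₂'⟩
          have ht₁T : t₁ ∈ T := by
            have hseg : t₁ ∈ segment ℝ (0:ℝ) t₂ := by
              rw [segment_eq_Icc (le_trans ht₁pos.le ht₂.le)]
              exact ⟨ht₁pos.le, ht₂.le⟩
            exact hTconv.segment_subset hT0 ht₂T hseg
          have hck := hb _ ht₁T.2
          rw [hexp] at hck
          rw [ht₁, div_mul_cancel₀ _ (ne_of_lt huneg)] at hck
          linarith
        set t₀ := sSup T with ht₀
        have ht₀T : t₀ ∈ T := hTclosed.csSup_mem ⟨0, hT0⟩ hTbdd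
        set y' := y + t₀ • u with hy'
        have hy'K : y' ∈ K := ht₀T.2
        have hy'h : h y' ≤ h y := by
          rw [hy', hexp]
          nlinarith [ht₀T.1]
        refine ⟨y', hy'K, hy'h, ?_⟩
        by_contra hcon
        push_neg at hcon
        have hev : ∀ᶠ δ in nhdsWithin (0:ℝ) (Set.Ioi 0), ∀ k, 0 ≤ g k (y' + δ • u) := by
          rw [Filter.eventually_all]
          intro k
          rcases lt_or_ge ((g k).linear u) 0 with hs | hs
          · have hgk : 0 < g k y' := lt_of_le_of_ne (hy'K k) (Ne.symm (hcon k hs))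
            have hco : Continuous fun δ : ℝ => g k y' + δ * (g k).linear u := by
              exact continuous_const.add (continuous_id.mul continuous_const)
            have hopen : IsOpen {δ : ℝ | 0 < g k y' + δ * (g k).linear u} :=
              isOpen_lt continuous_const hco
            have h0mem : (0:ℝ) ∈ {δ : ℝ | 0 < g k y' + δ * (g k).linear u} := by
              simp [hgk]
            have hnh : {δ : ℝ | 0 < g k y' + δ * (g k).linear u} ∈ nhds (0:ℝ) :=
              hopen.mem_nhds h0mem
            have := Filter.eventually_iff.mpr hnh
            refine ((this.filter_mono nhdsWithin_le_nhds).mono ?_)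
            intro δ hδ
            rw [hexp]
            exact hδ.le
          · filter_upwards [eventually_mem_nhdsWithin] with δ hδ
            rw [hexp]
            have : (0:ℝ) < δ := hδ
            nlinarith [hy'K k]
        obtain ⟨δ, hδall, hδpos⟩ := (hev.and eventually_mem_nhdsWithin).exists
        have hδ0 : (0:ℝ) < δ := hδpos
        have hmem : t₀ + δ ∈ T := by
          refine ⟨by linarith [ht₀T.1], ?_⟩
          have heq : y + (t₀ + δ) • u = y' + δ • u := by
            rw [hy', add_smul]
            abel
          rw [heq]
          exact hδall
        have := le_csSup hTbdd hmem
        linarith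
      -- the good set and subproblem minima
      set Good := {k : ι | (g k).linear u < 0 ∧ (K ∩ {x | g k x = 0}).Nonempty} with hGood
      have hsubmin : ∀ k, k ∈ Good → ∃ p ∈ K ∩ {x | g k x = 0},
          ∀ y ∈ K ∩ {x | g k x = 0}, h p ≤ h y := by
        intro k hk
        set g' : Option ι → ((Fin ℓ → ℝ) →ᵃ[ℝ] ℝ) := fun o => o.elim (-(g k)) g with hg'
        have hset : {x : Fin ℓ → ℝ | ∀ o, 0 ≤ g' o x} = K ∩ {x | g k x = 0} := by
          ext x
          simp only [Set.mem_setOf_eq, Set.mem_inter_iff, hg', Option.forall,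
            Option.elim, AffineMap.coe_neg, Pi.neg_apply, hK]
          constructor
          · rintro ⟨hn, hs⟩
            exact ⟨hs, le_antisymm (by linarith) (hs k)⟩
          · rintro ⟨hs, h0⟩
            exact ⟨by rw [h0]; simp, hs⟩
        have hne' : {x : Fin ℓ → ℝ | ∀ o, 0 ≤ g' o x}.Nonempty := by
          rw [hset]; exact hk.2
        have hb' : ∀ x ∈ {x : Fin ℓ → ℝ | ∀ o, 0 ≤ g' o x}, c ≤ h x := by
          intro x hx
          rw [hset] at hx
          exact hb x hx.1
        have hd' : Module.finrank ℝ
            (affineSpan ℝ {x : Fin ℓ → ℝ | ∀ o, 0 ≤ g' o x}).direction ≤ d := by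
          rw [hset]
          obtain ⟨x', hx'⟩ := hk.2
          have hsub : K ∩ {x | g k x = 0} ⊆
              (AffineSubspace.mk' x' (LinearMap.ker (g k).linear) : Set (Fin ℓ → ℝ)) := by
            intro w hw
            simp only [SetLike.mem_coe, AffineSubspace.mem_mk', LinearMap.mem_ker]
            have := (g k).linearMap_vsub w x'
            rw [this, hw.2, hx'.2]
            simp
          have hker : (affineSpan ℝ (K ∩ {x | g k x = 0})).direction ≤
              LinearMap.ker (g k).linear := by
            have h1 : affineSpan ℝ (K ∩ {x | g k x = 0}) ≤
                AffineSubspace.mk' x' (LinearMap.ker (g k).linear) := by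
              rw [affineSpan_le]
              exact hsub
            have h2 := AffineSubspace.direction_le h1
            rwa [AffineSubspace.direction_mk'] at h2
          have hdirle : (affineSpan ℝ (K ∩ {x | g k x = 0})).direction ≤
              (affineSpan ℝ K).direction :=
            AffineSubspace.direction_le (affineSpan_mono ℝ Set.inter_subset_left)
          have hlt : (affineSpan ℝ (K ∩ {x | g k x = 0})).direction <
              (affineSpan ℝ K).direction := by
            refine lt_of_le_of_ne hdirle ?_
            intro heq
            have : u ∈ (affineSpan ℝ (K ∩ {x | g k x = 0})).direction := heq ▸ huDir
            have := hker this
            rw [LinearMap.mem_ker] at this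
            exact absurd this (ne_of_lt hk.1)
          have := Submodule.finrank_lt_finrank_of_lt hlt
          omega
        obtain ⟨p, hp, hpmin⟩ := IH g' h c hne' hb' hd'
        rw [hset] at hp
        refine ⟨p, hp, fun y hy => ?_⟩
        apply hpmin
        rw [hset]
        exact hy
      obtain ⟨x₀, hx₀⟩ := hne
      have hdef : ∀ k : ι, ∃ p : Fin ℓ → ℝ, k ∈ Good →
          p ∈ K ∩ {x | g k x = 0} ∧ ∀ y ∈ K ∩ {x | g k x = 0}, h p ≤ h y := by
        intro k
        by_cases hk : k ∈ Good
        · obtain ⟨p, hp, hpm⟩ := hsubmin k hk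
          exact ⟨p, fun _ => ⟨hp, hpm⟩⟩
        · exact ⟨x₀, fun h' => absurd h' hk⟩
      choose pf hpf using hdef
      have hcover : ∀ y ∈ K, ∃ k ∈ Good, h (pf k) ≤ h y := by
        intro y hy
        obtain ⟨y', hy'K, hy'le, k, hks, hky'⟩ := key y hy
        have hkG : k ∈ Good := ⟨hks, ⟨y', hy'K, hky'⟩⟩
        obtain ⟨hpmem, hpm⟩ := hpf k hkG
        exact ⟨k, hkG, le_trans (hpm y' ⟨hy'K, hky'⟩) hy'le⟩
      obtain ⟨k₀, hk₀G, _⟩ := hcover a ha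
      set GoodF : Finset ι := Finset.univ.filter (· ∈ Good) with hGoodF
      have hk₀F : k₀ ∈ GoodF := by simp [hGoodF, hk₀G]
      obtain ⟨ks, hksF, hksmin⟩ := GoodF.exists_min_image (fun k => h (pf k)) ⟨k₀, hk₀F⟩
      have hksG : ks ∈ Good := by
        simp only [hGoodF, Finset.mem_filter] at hksF
        exact hksF.2
      obtain ⟨hksmem, _⟩ := hpf ks hksG
      refine ⟨pf ks, hksmem.1, fun y hy => ?_⟩
      obtain ⟨k, hkG, hkle⟩ := hcover y hy
      have hkF : k ∈ GoodF := by simp [hGoodF, hkG]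
      exact le_trans (hksmin k hkF) hkle

lemma closure_F_inter_cell (𝓕 : Flag ℓ) (q : ℕ) (A : Arrangement ℓ n) (s : Set (Fin n))
    (x₀ : Fin ℓ → ℝ) (hne : (𝓕.F q ∩ cell A s x₀).Nonempty) :
    closure (𝓕.F q ∩ cell A s x₀) =
      {y | y ∈ 𝓕.F q ∧ ∀ i ∈ s, 0 ≤ A.α i x₀ * A.α i y} := by
  apply Set.Subset.antisymm
  · apply closure_minimal
    · rintro y ⟨hyF, hyc⟩
      exact ⟨hyF, fun i hi => (hyc i hi).le⟩
    · have heq : {y | y ∈ 𝓕.F q ∧ ∀ i ∈ s, 0 ≤ A.α i x₀ * A.α i y} =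
          𝓕.F q ∩ ⋂ i ∈ s, {y | 0 ≤ A.α i x₀ * A.α i y} := by
        ext y
        simp only [Set.mem_setOf_eq, Set.mem_inter_iff, Set.mem_iInter]
      rw [heq]
      refine (F_closed 𝓕 q).inter ?_
      refine isClosed_biInter fun i _ => ?_
      exact isClosed_le continuous_const (continuous_const.mul (affine_continuous (A.α i)))
  · rintro y ⟨hyF, hy⟩
    obtain ⟨y₀, hy₀F, hy₀⟩ := hne
    have htend : Filter.Tendsto (fun ε : ℝ => y + ε • (y₀ - y))
        (nhdsWithin (0:ℝ) (Set.Ioi 0)) (nhds y) := by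
      have hco : Continuous fun ε : ℝ => y + ε • (y₀ - y) :=
        continuous_const.add (continuous_id.smul continuous_const)
      have h0 : (fun ε : ℝ => y + ε • (y₀ - y)) 0 = y := by simp
      exact (hco.tendsto' 0 y h0).mono_left nhdsWithin_le_nhds
    refine mem_closure_of_tendsto htend ?_
    filter_upwards [Ioc_mem_nhdsGT_of_mem (Set.mem_Ico.mpr ⟨le_refl (0:ℝ), zero_lt_one⟩)]
      with ε hε
    obtain ⟨hε0, hε1⟩ := hε
    constructor
    · intro j hj
      rw [affine_comb]
      rw [hyF j hj, hy₀F j hj]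
      ring
    · intro i hi
      rw [affine_comb]
      have h1 := hy i hi
      have h2 := hy₀ i hi
      nlinarith

end Aux

end IY

namespace IY
open Arrangement

set_option maxHeartbeats 2000000 in
/-- Every point `x + iv ∈ M(A)` lies in some piece `S(C)`:
`x` avoids all hyperplanes parallel to `v`; if `D` is the chamber of the
subarrangement `A_{[v]}` containing `x` and `q = min {i : D ∩ F^i ≠ ∅}`, then
there is `C ∈ ch^q_F(A)` with `C ⊆ D` and `x + iv ∈ S(C)`. -/
theorem point_in_some_S (ℓ n : ℕ) (A : Arrangement ℓ n) (𝓕 : Flag ℓ)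
    (hind : LinearIndependent ℝ fun j : Fin ℓ => (𝓕.h j).linear)
    (hgen : GenericFlag A 𝓕)
    (h1 : Cond1On A Set.univ 𝓕) (h2 : Cond2On A Set.univ 𝓕)
    (z : Fin ℓ → ℂ) (hz : z ∈ A.M)
    (D : Set (Fin ℓ → ℝ))
    (hD : D = connectedComponentIn
      (A.compOn {i | (A.α i).linear (imP z) = 0}) (reP z))
    (q : ℕ) (hq : q = sInf {i : ℕ | (D ∩ 𝓕.F i).Nonempty}) :
    (∀ i : Fin n, (A.α i).linear (imP z) = 0 → A.α i (reP z) ≠ 0) ∧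
    ∃ C : Set (Fin ℓ → ℝ), ChF A 𝓕 q C ∧ C ⊆ D ∧
      ∃ X : Set (Fin ℓ → ℝ), IsXC A 𝓕 q C X ∧
        ∀ p ∈ C ∩ 𝓕.F q, z ∈ S A (tau X) p := by
  classical
  set x := reP z with hxdef
  set v := imP z with hvdef
  set B : Set (Fin n) := {i | (A.α i).linear v = 0} with hBdef
  have hpart1 : ∀ i : Fin n, (A.α i).linear (imP z) = 0 → A.α i (reP z) ≠ 0 := by
    intro i hlin hre
    exact hz i ⟨hre, hlin⟩
  refine ⟨hpart1, ?_⟩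
  have hxcomp : x ∈ A.compOn B := fun i hi => hpart1 i hi
  have hDcell : D = cell A B x := by
    rw [hD]; exact connectedComponentIn_eq_cell A B hxcomp
  have hxD : x ∈ D := by rw [hDcell]; exact cell_self hxcomp
  set Sq := {i : ℕ | (D ∩ 𝓕.F i).Nonempty} with hSqdef
  have hFl : 𝓕.F ℓ = Set.univ := by
    ext w
    simp only [Flag.F, Set.mem_setOf_eq, Set.mem_univ, iff_true]
    intro j hj
    exact absurd j.2 (by omega)
  have hlSq : ℓ ∈ Sq := ⟨x, hxD, by rw [hFl]; trivial⟩
  have hqle : q ≤ ℓ := hq ▸ Nat.sInf_le hlSq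
  have hDq : (D ∩ 𝓕.F q).Nonempty := hq ▸ Nat.sInf_mem ⟨ℓ, hlSq⟩
  have hDlt : ∀ j, j < q → D ∩ 𝓕.F j = ∅ := by
    intro j hj
    by_contra hne
    have hmem : j ∈ Sq := Set.nonempty_iff_ne_empty.mpr hne
    have := Nat.sInf_le hmem
    omega
  have hLuniv : A.L Set.univ := ⟨⟨0, trivial⟩, ∅, Set.empty_subset _, by simp⟩
  have hDconv : Convex ℝ D := hDcell ▸ cell_convex A B x
  have hDopen : IsOpen D := hDcell ▸ cell_isOpen A B x
  have hSep : ∀ p' ∈ D, ∀ i, SepPt A p' x i → (A.α i).linear v = 0 → False := by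
    intro p' hp' i hsep hlin
    obtain ⟨w, hwseg, hw0⟩ := hsep
    have hwD : w ∈ D := hDconv.segment_subset hp' hxD hwseg
    have hwcomp : w ∈ A.compOn B := by
      rw [hDcell] at hwD
      exact cell_subset_compOn A B x hwD
    exact hwcomp i hlin hw0
  rcases Nat.eq_zero_or_pos q with hq0 | hq1
  · -- q = 0 branch
    subst hq0
    obtain ⟨W0, hW0ne, hW0coe, hW0rank⟩ :=
      (hgen Set.univ hLuniv 0 (Nat.zero_le _)).1 (by rw [dimS_univ]; omega)
    obtain ⟨p₀, hp₀W⟩ := hW0ne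
    have hW0rank0 : Module.finrank ℝ W0.direction = 0 := by
      rw [hW0rank, dimS_univ]; omega
    have hp₀F : p₀ ∈ 𝓕.F 0 := by
      have : p₀ ∈ (W0 : Set (Fin ℓ → ℝ)) := hp₀W
      rw [hW0coe] at this
      exact this.1
    have hF0 : 𝓕.F 0 = {p₀} := by
      apply Set.Subset.antisymm
      · intro y hy
        have hyW : y ∈ W0 := by
          have : y ∈ (W0 : Set (Fin ℓ → ℝ)) := by
            rw [hW0coe]; exact ⟨hy, trivial⟩
          exact this
        exact eq_of_finrank_zero hW0rank0 hp₀W hyW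
      · intro y hy
        rw [Set.mem_singleton_iff] at hy
        rw [hy]
        exact hp₀F
    have hp₀D : p₀ ∈ D := by
      have h0Sq : (0 : ℕ) ∈ Sq := by
        rcases Nat.sInf_eq_zero.mp hq.symm with h | h
        · exact h
        · exact absurd (h ▸ hlSq) (Set.notMem_empty ℓ)
      obtain ⟨w, hwD, hwF⟩ := h0Sq
      rw [hF0, Set.mem_singleton_iff] at hwF
      rw [← hwF]
      exact hwD
    have hp₀comp : p₀ ∈ A.compOn Set.univ := by
      intro i _ h0
      have hLH : A.L (A.H i) := ⟨H_nonempty A i, {i}, Set.subset_univ _, by simp⟩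
      have hℓ1 := ell_pos A i
      have hemp := (hgen (A.H i) hLH 0 (Nat.zero_le _)).2 (by rw [dimS_H]; omega)
      have hmem : p₀ ∈ 𝓕.F 0 ∩ A.H i := ⟨hp₀F, h0⟩
      rw [hemp] at hmem
      exact hmem
    set C := cell A Set.univ p₀ with hCdef
    have hCcc : connectedComponentIn (A.compOn Set.univ) p₀ = C :=
      connectedComponentIn_eq_cell A _ hp₀comp
    have hp₀C : p₀ ∈ C := cell_self hp₀comp
    have hCD : C ⊆ D := by
      have h1 : C ⊆ connectedComponentIn (A.compOn B) p₀ := by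
        rw [← hCcc]
        exact connectedComponentIn_mono p₀ (fun w hw i hi => hw i trivial)
      have h2 : connectedComponentIn (A.compOn B) p₀ = D := by
        have hmem : p₀ ∈ connectedComponentIn (A.compOn B) x := hD ▸ hp₀D
        rw [hD, connectedComponentIn_eq hmem]
      rw [← h2]
      exact h1
    refine ⟨C, ⟨⟨p₀, hp₀comp, hCcc.symm⟩, ⟨p₀, hp₀C, hp₀F⟩, Or.inl rfl⟩, hCD, Set.univ,
      ⟨hLuniv, by rw [dimS_univ]; omega, p₀, ?_, ?_, ?_⟩, ?_⟩
    · rw [Set.univ_inter, hF0]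
    · exact subset_closure ⟨hp₀C, hp₀F⟩
    · intro y hy
      have hsub : closure (C ∩ 𝓕.F 0) ⊆ {p₀} := by
        apply closure_minimal _ isClosed_singleton
        intro w hw
        rw [← hF0]
        exact hw.2
      have := hsub hy
      rw [Set.mem_singleton_iff] at this
      rw [this]
    · intro p' hp'
      refine ⟨?_, ?_⟩
      · show imP z ∈ tau Set.univ
        unfold tau
        rw [AffineSubspace.span_univ, AffineSubspace.direction_top]
        exact Submodule.mem_top
      · intro i hsep hlin
        exact hSep p' (hCD hp'.1) i hsep hlin

  · -- q ≥ 1 branch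
    have hq1ℓ : q - 1 < ℓ := by omega
    have hhq : 𝓕.hq q = 𝓕.h ⟨q - 1, hq1ℓ⟩ := hq_eq 𝓕 hq1ℓ
    set V₀ : Submodule ℝ (Fin ℓ → ℝ) :=
      ⨅ j ∈ {j : Fin ℓ | q ≤ (j : ℕ)}, LinearMap.ker (𝓕.h j).linear with hV₀def
    have hV₀mem : ∀ u, u ∈ V₀ ↔ ∀ j : Fin ℓ, q ≤ (j : ℕ) → (𝓕.h j).linear u = 0 := by
      intro u
      simp [hV₀def, Submodule.mem_iInf, LinearMap.mem_ker]
    have hFtrans : ∀ y ∈ 𝓕.F q, ∀ u ∈ V₀, ∀ t : ℝ, y + t • u ∈ 𝓕.F q := by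
      intro y hy u hu t j hj
      rw [apply_add, map_smul, smul_eq_mul, (hV₀mem u).mp hu j hj, hy j hj]
      ring
    have hFdiff : ∀ y yy : Fin ℓ → ℝ, y ∈ 𝓕.F q → yy ∈ 𝓕.F q → yy - y ∈ V₀ := by
      intro y yy hy hyy
      rw [hV₀mem]
      intro j hj
      have hv := (𝓕.h j).linearMap_vsub yy y
      rw [vsub_eq_sub, vsub_eq_sub] at hv
      rw [hv, hy j hj, hyy j hj]
      ring
    obtain ⟨Wu, hWune, hWucoe, hWurank⟩ :=
      (hgen Set.univ hLuniv q hqle).1 (by rw [dimS_univ]; omega)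
    have hslope : ∀ i : Fin n, ∃ w ∈ V₀, (A.α i).linear w ≠ 0 := by
      intro i
      by_contra hcon
      push_neg at hcon
      obtain ⟨y₁, hy₁⟩ := hWune
      have hy₁F : y₁ ∈ 𝓕.F q := by
        have : y₁ ∈ (Wu : Set (Fin ℓ → ℝ)) := hy₁
        rw [hWucoe] at this
        exact this.1
      have hconst : ∀ y ∈ 𝓕.F q, A.α i y = A.α i y₁ := by
        intro y hy
        have hdiff : y - y₁ ∈ V₀ := hFdiff y₁ y hy₁F hy
        have happ : A.α i y = A.α i y₁ + (A.α i).linear (y - y₁) := by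
          have h := apply_add (A.α i) y₁ (y - y₁)
          rw [add_sub_cancel] at h
          exact h
        rw [happ, hcon _ hdiff, add_zero]
      have hLH : A.L (A.H i) := ⟨H_nonempty A i, {i}, Set.subset_univ _, by simp⟩
      have hℓ1 := ell_pos A i
      obtain ⟨Wi, hWine, hWicoe, hWirank⟩ :=
        (hgen (A.H i) hLH q hqle).1 (by rw [dimS_H]; omega)
      obtain ⟨w₁, hw₁⟩ := hWine
      have hw₁mem : w₁ ∈ 𝓕.F q ∩ A.H i := by
        have : w₁ ∈ (Wi : Set (Fin ℓ → ℝ)) := hw₁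
        rw [hWicoe] at this
        exact this
      have hally : ∀ y ∈ 𝓕.F q, A.α i y = 0 := by
        intro y hy
        rw [hconst y hy, ← hconst w₁ hw₁mem.1]
        exact hw₁mem.2
      have hcoeeq : (Wi : Set (Fin ℓ → ℝ)) = (Wu : Set (Fin ℓ → ℝ)) := by
        rw [hWicoe, hWucoe]
        ext w
        simp only [Set.mem_inter_iff, Set.mem_univ, and_true]
        exact ⟨fun hw => hw.1, fun hw => ⟨hw, hally w hw⟩⟩
      have hWW : Wi = Wu := SetLike.coe_injective hcoeeq
      rw [hWW, hWurank] at hWirank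
      rw [dimS_H, dimS_univ] at hWirank
      omega
    obtain ⟨u₀, hu₀V, hu₀⟩ := exists_forall_ne V₀ (fun i => (A.α i).linear) hslope
    have hDFq_pos : ∀ y ∈ D ∩ 𝓕.F q, 0 ≤ 𝓕.hq q y := by
      intro y hyDF
      by_contra hneg
      rw [not_le] at hneg
      obtain ⟨hyD, hyF⟩ := hyDF
      obtain ⟨δ₁, hδ₁pos, hball⟩ := Metric.isOpen_iff.mp hDopen y hyD
      set sl := (𝓕.hq q).linear u₀ with hsldef
      set δ₂ := min (δ₁ / (‖u₀‖ + 1)) ((-(𝓕.hq q y)) / (|sl| + 1)) with hδ₂def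
      have hδ₂pos : 0 < δ₂ :=
        lt_min (div_pos hδ₁pos (by positivity)) (div_pos (by linarith) (by positivity))
      set Bad : Set ℝ := {ε | ∃ i : Fin n, A.α i (y + ε • u₀) = 0} with hBaddef
      have hBadfin : Bad.Finite := by
        have hsub : Bad ⊆ ⋃ i : Fin n, {ε | A.α i (y + ε • u₀) = 0} := by
          intro ε hε
          obtain ⟨i, hi⟩ := hε
          exact Set.mem_iUnion.mpr ⟨i, hi⟩
        refine Set.Finite.subset (Set.finite_iUnion fun i => ?_) hsub
        apply Set.Finite.subset (Set.finite_singleton (-(A.α i y) / ((A.α i).linear u₀)))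
        intro ε hε
        rw [Set.mem_setOf_eq, apply_add, map_smul, smul_eq_mul] at hε
        rw [Set.mem_singleton_iff, eq_div_iff (hu₀ i)]
        linarith
      obtain ⟨ε, hεmem⟩ := ((Set.Ioo_infinite hδ₂pos).diff hBadfin).nonempty
      obtain ⟨hεIoo, hεBad⟩ := hεmem
      obtain ⟨hε0, hεδ⟩ := hεIoo
      set y' := y + ε • u₀ with hy'def
      have hnorm : ‖u₀‖ + 1 > 0 := by positivity
      have hy'D : y' ∈ D := by
        apply hball
        rw [Metric.mem_ball, dist_eq_norm, hy'def, add_sub_cancel_left, norm_smul,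
          Real.norm_eq_abs, abs_of_pos hε0]
        have h1 : ε < δ₁ / (‖u₀‖ + 1) := lt_of_lt_of_le hεδ (min_le_left _ _)
        have h2 : ε * (‖u₀‖ + 1) < δ₁ := by
          rw [← lt_div_iff₀ hnorm]
          exact h1
        nlinarith [norm_nonneg u₀]
      have hy'F : y' ∈ 𝓕.F q := hFtrans y hyF u₀ hu₀V ε
      have hy'comp : y' ∈ A.compOn Set.univ := fun i _ h0 => hεBad ⟨i, h0⟩
      set Cy := connectedComponentIn (A.compOn Set.univ) y' with hCydef
      have hCych : A.IsChamber Cy := ⟨y', hy'comp, rfl⟩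
      have hCyD : Cy ⊆ D := by
        have hss : Cy ⊆ connectedComponentIn (A.compOn B) y' :=
          connectedComponentIn_mono y' (fun w hw i hi => hw i trivial)
        have heq : connectedComponentIn (A.compOn B) y' = D := by
          have hmem : y' ∈ connectedComponentIn (A.compOn B) x := hD ▸ hy'D
          rw [hD, connectedComponentIn_eq hmem]
        rw [← heq]
        exact hss
      have hCyF : (Cy ∩ 𝓕.F q).Nonempty := ⟨y', mem_connectedComponentIn hy'comp, hy'F⟩
      have hCyF' : Cy ∩ 𝓕.F (q - 1) = ∅ := by
        have hsub : Cy ∩ 𝓕.F (q - 1) ⊆ D ∩ 𝓕.F (q - 1) :=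
          Set.inter_subset_inter_left _ hCyD
        rw [hDlt (q - 1) (by omega)] at hsub
        exact Set.subset_empty_iff.mp hsub
      have hpos := h1 q hq1 hqle Cy hCych hCyF hCyF' y'
        ⟨mem_connectedComponentIn hy'comp, hy'F⟩
      have hval : 𝓕.hq q y' = 𝓕.hq q y + ε * sl := by
        rw [hy'def, apply_add, map_smul, smul_eq_mul, hsldef]
      have hb1 : ε * sl ≤ ε * |sl| := mul_le_mul_of_nonneg_left (le_abs_self sl) hε0.le
      have hb2 : ε * (|sl| + 1) < -(𝓕.hq q y) := by
        have h1' : ε < (-(𝓕.hq q y)) / (|sl| + 1) := lt_of_lt_of_le hεδ (min_le_right _ _)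
        have hp : (0:ℝ) < |sl| + 1 := by positivity
        rw [← lt_div_iff₀ hp]
        exact h1'
      nlinarith [abs_nonneg sl]
    set KD := {w : Fin ℓ → ℝ | w ∈ 𝓕.F q ∧ ∀ i ∈ B, 0 ≤ A.α i x * A.α i w} with hKDdef
    have hDFne : (𝓕.F q ∩ cell A B x).Nonempty := by
      obtain ⟨w, hwD, hwF⟩ := hDq
      exact ⟨w, hwF, hDcell ▸ hwD⟩
    have hKDclos : closure (𝓕.F q ∩ cell A B x) = KD :=
      closure_F_inter_cell 𝓕 q A B x hDFne
    have hKDpos : ∀ w ∈ KD, 0 ≤ 𝓕.hq q w := by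
      rw [← hKDclos]
      intro w hw
      have hsub : 𝓕.F q ∩ cell A B x ⊆ {w | 0 ≤ 𝓕.hq q w} := by
        rintro w' ⟨hw'F, hw'c⟩
        exact hDFq_pos w' ⟨hDcell ▸ hw'c, hw'F⟩
      exact closure_minimal hsub (isClosed_le continuous_const (affine_continuous _)) hw
    set gf : (Fin ℓ ⊕ Fin ℓ) ⊕ Fin n → ((Fin ℓ → ℝ) →ᵃ[ℝ] ℝ) :=
      Sum.elim (Sum.elim (fun j => if q ≤ (j : ℕ) then 𝓕.h j else 0)
                         (fun j => if q ≤ (j : ℕ) then -(𝓕.h j) else 0))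
               (fun i => if i ∈ B then (A.α i x) • (A.α i) else 0) with hgfdef
    have hgfK : {w : Fin ℓ → ℝ | ∀ k, 0 ≤ gf k w} = KD := by
      ext w
      simp only [Set.mem_setOf_eq, Sum.forall, hgfdef, Sum.elim_inl, Sum.elim_inr, hKDdef]
      constructor
      · rintro ⟨⟨ha1, ha2⟩, ha3⟩
        refine ⟨fun j hj => ?_, fun i hi => ?_⟩
        · have b1 := ha1 j
          have b2 := ha2 j
          rw [if_pos hj] at b1 b2
          have b2' : 0 ≤ -(𝓕.h j w) := by
            simpa [AffineMap.coe_neg] using b2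
          linarith
        · have b3 := ha3 i
          rw [if_pos hi] at b3
          simpa [AffineMap.coe_smul, smul_eq_mul] using b3
      · rintro ⟨hb1, hb2⟩
        refine ⟨⟨fun j => ?_, fun j => ?_⟩, fun i => ?_⟩
        · by_cases hj : q ≤ (j : ℕ)
          · rw [if_pos hj, hb1 j hj]
          · rw [if_neg hj]; simp
        · by_cases hj : q ≤ (j : ℕ)
          · rw [if_pos hj]
            simp only [AffineMap.coe_neg, Pi.neg_apply]
            rw [hb1 j hj]; simp
          · rw [if_neg hj]; simp
        · by_cases hi : i ∈ B
          · rw [if_pos hi]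
            simpa [AffineMap.coe_smul, smul_eq_mul] using hb2 i hi
          · rw [if_neg hi]; simp
    have hKDne : KD.Nonempty := by
      obtain ⟨w, hw⟩ := hDFne
      exact ⟨w, hKDclos ▸ subset_closure hw⟩
    obtain ⟨p, hpKD, hpmin⟩ := by
      have happ := lp_aux (ℓ := ℓ) ℓ gf (𝓕.hq q) 0
        (by rw [hgfK]; exact hKDne)
        (by rw [hgfK]; exact hKDpos)
        (by
          refine le_trans (Submodule.finrank_le _) ?_
          rw [Module.finrank_pi]
          simp)
      rw [hgfK] at happ
      exact happ
    obtain ⟨hpF, hpB⟩ := hpKD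
    set t : Set (Fin n) := {i | i ∈ B ∧ A.α i p = 0} with htdef
    set X : Set (Fin ℓ → ℝ) := ⋂ i ∈ t, A.H i with hXdef
    have hXmem : ∀ w, w ∈ X ↔ ∀ i ∈ t, A.α i w = 0 := by
      intro w
      simp [hXdef, Arrangement.H, Set.mem_iInter]
    have hpX : p ∈ X := (hXmem p).mpr fun i hi => hi.2
    have hLX : A.L X := ⟨⟨p, hpX⟩, t, Set.subset_univ t, rfl⟩
    have hd1 : ℓ ≤ q + dimS X := by
      by_contra hcon
      push_neg at hcon
      have hemp := (hgen X hLX q hqle).2 hcon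
      have hmem : p ∈ 𝓕.F q ∩ X := ⟨hpF, hpX⟩
      rw [hemp] at hmem
      exact hmem
    have hd2 : dimS X ≤ ℓ - q := by
      by_contra hcon
      push_neg at hcon
      obtain ⟨W', hW'ne, hW'coe, hW'rank⟩ := (hgen X hLX (q - 1) (by omega)).1 (by omega)
      obtain ⟨W, hWne, hWcoe, hWrank⟩ := (hgen X hLX q hqle).1 (by omega)
      by_cases hcst : ∀ a ∈ 𝓕.F q ∩ X, ∀ b ∈ 𝓕.F q ∩ X, 𝓕.hq q a = 𝓕.hq q b
      · obtain ⟨w', hw'⟩ := hW'ne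
        have hw'mem : w' ∈ 𝓕.F (q - 1) ∩ X := by
          have : w' ∈ (W' : Set (Fin ℓ → ℝ)) := hw'
          rw [hW'coe] at this
          exact this
        have hw'Fq : w' ∈ 𝓕.F q ∩ X := ⟨F_mono 𝓕 (by omega) hw'mem.1, hw'mem.2⟩
        have hw'0 : 𝓕.hq q w' = 0 := by
          rw [hhq]
          exact hw'mem.1 ⟨q - 1, hq1ℓ⟩ (by simp)
        have hsub : 𝓕.F q ∩ X ⊆ 𝓕.F (q - 1) ∩ X := by
          rintro w ⟨hwF, hwX⟩
          refine ⟨(mem_F_pred 𝓕 hq1 hq1ℓ w).mpr ⟨hwF, ?_⟩, hwX⟩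
          rw [← hhq]
          rw [hcst w ⟨hwF, hwX⟩ w' hw'Fq]
          exact hw'0
        have hcoeeq : (W : Set (Fin ℓ → ℝ)) = (W' : Set (Fin ℓ → ℝ)) := by
          rw [hWcoe, hW'coe]
          apply Set.Subset.antisymm hsub
          rintro w ⟨hwF, hwX⟩
          exact ⟨F_mono 𝓕 (by omega) hwF, hwX⟩
        have hWW : W = W' := SetLike.coe_injective hcoeeq
        rw [hWW, hW'rank] at hWrank
        omega
      · push_neg at hcst
        obtain ⟨aa, haa, bb, hbb, hab⟩ := hcst
        obtain ⟨a2, ha2, b2, hb2, hlt2⟩ : ∃ a2 ∈ 𝓕.F q ∩ X, ∃ b2 ∈ 𝓕.F q ∩ X,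
            𝓕.hq q b2 < 𝓕.hq q a2 := by
          rcases lt_or_gt_of_ne hab with h' | h'
          · exact ⟨bb, hbb, aa, haa, h'⟩
          · exact ⟨aa, haa, bb, hbb, h'⟩
        set uu := b2 - a2 with huudef
        have hsl : (𝓕.hq q).linear uu = 𝓕.hq q b2 - 𝓕.hq q a2 := by
          have hv := (𝓕.hq q).linearMap_vsub b2 a2
          rw [vsub_eq_sub, vsub_eq_sub] at hv
          rw [huudef]
          exact hv
        have hslneg : (𝓕.hq q).linear uu < 0 := by rw [hsl]; linarith
        have hmemW : ∀ w, w ∈ 𝓕.F q ∩ X → w ∈ W := by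
          intro w hw
          have : w ∈ (W : Set (Fin ℓ → ℝ)) := by rw [hWcoe]; exact hw
          exact this
        have hpW : p ∈ W := hmemW p ⟨hpF, hpX⟩
        have huuD : uu ∈ W.direction := by
          have := AffineSubspace.vsub_mem_direction (hmemW b2 hb2) (hmemW a2 ha2)
          rwa [vsub_eq_sub] at this
        have hps : ∀ s : ℝ, p + s • uu ∈ 𝓕.F q ∩ X := by
          intro s
          have hsm : s • uu ∈ W.direction := Submodule.smul_mem _ _ huuD
          have hmem : s • uu +ᵥ p ∈ W := AffineSubspace.vadd_mem_of_mem_direction hsm hpW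
          have heq : p + s • uu = s • uu +ᵥ p := by
            rw [vadd_eq_add, add_comm]
          rw [heq]
          have : s • uu +ᵥ p ∈ (W : Set (Fin ℓ → ℝ)) := hmem
          rw [hWcoe] at this
          exact this
        have hev : ∀ᶠ s in nhdsWithin (0:ℝ) (Set.Ioi 0),
            ∀ i, i ∈ B → 0 ≤ A.α i x * A.α i (p + s • uu) := by
          rw [Filter.eventually_all]
          intro i
          by_cases hiB : i ∈ B
          · by_cases hit : i ∈ t
            · filter_upwards with s _
              have h0 : A.α i (p + s • uu) = 0 := (hXmem _).mp (hps s).2 i hit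
              rw [h0, mul_zero]
            · have hip : A.α i p ≠ 0 := fun h0 => hit ⟨hiB, h0⟩
              have hpos0 : 0 < A.α i x * A.α i p :=
                lt_of_le_of_ne (hpB i hiB) (Ne.symm (mul_ne_zero (hpart1 i hiB) hip))
              have hco : Continuous fun s : ℝ => A.α i x * A.α i (p + s • uu) :=
                continuous_const.mul ((affine_continuous (A.α i)).comp
                  (continuous_const.add (continuous_id.smul continuous_const)))
              have hopen : IsOpen {s : ℝ | 0 < A.α i x * A.α i (p + s • uu)} :=
                isOpen_lt continuous_const hco
              have h0mem : (0:ℝ) ∈ {s : ℝ | 0 < A.α i x * A.α i (p + s • uu)} := by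
                simp only [Set.mem_setOf_eq, zero_smul, add_zero]
                exact hpos0
              have hnh := hopen.mem_nhds h0mem
              have hev' := Filter.eventually_iff.mpr hnh
              refine ((hev'.filter_mono nhdsWithin_le_nhds).mono ?_)
              intro s hs _
              exact hs.le
          · filter_upwards with s
            exact fun his => absurd his hiB
        obtain ⟨s0, hs0prop, hs0pos⟩ := (hev.and eventually_mem_nhdsWithin).exists
        have hs0pos' : (0:ℝ) < s0 := hs0pos
        have hs0KD : p + s0 • uu ∈ KD := ⟨(hps s0).1, fun i hi => hs0prop i hi⟩
        have hminle := hpmin _ hs0KD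
        have hval : 𝓕.hq q (p + s0 • uu) = 𝓕.hq q p + s0 * (𝓕.hq q).linear uu := by
          rw [apply_add, map_smul, smul_eq_mul]
        nlinarith
    have hdim : dimS X = ℓ - q := le_antisymm hd2 (by omega)
    obtain ⟨Wq, hWqne, hWqcoe, hWqrank⟩ := (hgen X hLX q hqle).1 (by omega)
    have hWqrank0 : Module.finrank ℝ Wq.direction = 0 := by
      rw [hWqrank, hdim]
      omega
    have hpWq : p ∈ Wq := by
      have : p ∈ (Wq : Set (Fin ℓ → ℝ)) := by rw [hWqcoe]; exact ⟨hpF, hpX⟩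
      exact this
    have hXF : X ∩ 𝓕.F q = {p} := by
      apply Set.Subset.antisymm
      · rintro w ⟨hwX, hwF⟩
        have hwW : w ∈ Wq := by
          have : w ∈ (Wq : Set (Fin ℓ → ℝ)) := by rw [hWqcoe]; exact ⟨hwF, hwX⟩
          exact this
        exact eq_of_finrank_zero hWqrank0 hpWq hwW
      · intro w hw
        rw [Set.mem_singleton_iff] at hw
        rw [hw]
        exact ⟨hpX, hpF⟩
    -- chamber construction near p
    set U := {w : Fin ℓ → ℝ | ∀ i : Fin n, A.α i p ≠ 0 → 0 < A.α i p * A.α i w} with hUdef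
    have hUopen : IsOpen U := by
      have hU2 : U = ⋂ i : Fin n, {w | A.α i p ≠ 0 → 0 < A.α i p * A.α i w} := by
        ext w; simp [hUdef]
      rw [hU2]
      refine isOpen_iInter_of_finite fun i => ?_
      by_cases hip : A.α i p = 0
      · have : {w : Fin ℓ → ℝ | A.α i p ≠ 0 → 0 < A.α i p * A.α i w} = Set.univ := by
          ext w; simp [hip]
        rw [this]; exact isOpen_univ
      · have : {w : Fin ℓ → ℝ | A.α i p ≠ 0 → 0 < A.α i p * A.α i w} =
            {w | 0 < A.α i p * A.α i w} := by
          ext w; simp [hip]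
        rw [this]
        exact isOpen_lt continuous_const (continuous_const.mul (affine_continuous (A.α i)))
    have hpU : p ∈ U := fun i hi => mul_self_pos.mpr hi
    obtain ⟨r', hr'pos, hrball⟩ := Metric.isOpen_iff.mp hUopen p hpU
    have hpclos : p ∈ closure (𝓕.F q ∩ cell A B x) := by
      rw [hKDclos]
      exact ⟨hpF, hpB⟩
    obtain ⟨y, hyO, hydist⟩ : ∃ y ∈ 𝓕.F q ∩ cell A B x, dist p y < r' / 2 := by
      have := Metric.mem_closure_iff.mp hpclos (r' / 2) (by positivity)
      exact this
    obtain ⟨hyF, hycell⟩ := hyO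
    have hyD : y ∈ D := hDcell ▸ hycell
    obtain ⟨δ₁, hδ₁pos, hball⟩ := Metric.isOpen_iff.mp hDopen y hyD
    have hnorm : (0:ℝ) < ‖u₀‖ + 1 := by positivity
    set δ₂ := min δ₁ (r' / 2) / (‖u₀‖ + 1) with hδ₂def
    have hδ₂pos : 0 < δ₂ := div_pos (lt_min hδ₁pos (by positivity)) hnorm
    set Bad : Set ℝ := {ε | ∃ i : Fin n, A.α i (y + ε • u₀) = 0} with hBaddef
    have hBadfin : Bad.Finite := by
      have hsub : Bad ⊆ ⋃ i : Fin n, {ε | A.α i (y + ε • u₀) = 0} := by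
        intro ε hε
        obtain ⟨i, hi⟩ := hε
        exact Set.mem_iUnion.mpr ⟨i, hi⟩
      refine Set.Finite.subset (Set.finite_iUnion fun i => ?_) hsub
      apply Set.Finite.subset (Set.finite_singleton (-(A.α i y) / ((A.α i).linear u₀)))
      intro ε hε
      rw [Set.mem_setOf_eq, apply_add, map_smul, smul_eq_mul] at hε
      rw [Set.mem_singleton_iff, eq_div_iff (hu₀ i)]
      linarith
    obtain ⟨ε, hεmem⟩ := ((Set.Ioo_infinite hδ₂pos).diff hBadfin).nonempty
    obtain ⟨⟨hε0, hεδ⟩, hεBad⟩ := hεmem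
    set y' := y + ε • u₀ with hy'def
    have hεnorm : ε * ‖u₀‖ < min δ₁ (r' / 2) := by
      have h2' : ε * (‖u₀‖ + 1) < min δ₁ (r' / 2) := by
        rw [← lt_div_iff₀ hnorm]
        exact hεδ
      nlinarith [norm_nonneg u₀]
    have hdyy' : dist y' y < min δ₁ (r' / 2) := by
      rw [dist_eq_norm, hy'def, add_sub_cancel_left, norm_smul, Real.norm_eq_abs,
        abs_of_pos hε0]
      exact hεnorm
    have hy'D : y' ∈ D := by
      apply hball
      rw [Metric.mem_ball]
      exact lt_of_lt_of_le hdyy' (min_le_left _ _)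
    have hy'F : y' ∈ 𝓕.F q := hFtrans y hyF u₀ hu₀V ε
    have hy'comp : y' ∈ A.compOn Set.univ := fun i _ h0 => hεBad ⟨i, h0⟩
    have hdisty' : dist y' p < r' := by
      calc dist y' p ≤ dist y' y + dist y p := dist_triangle _ _ _
      _ < min δ₁ (r' / 2) + r' / 2 := by
          have := dist_comm p y ▸ hydist
          exact add_lt_add hdyy' this
      _ ≤ r' / 2 + r' / 2 := by
          have := min_le_right δ₁ (r' / 2)
          linarith
      _ = r' := by ring
    have hy'U : y' ∈ U := hrball (Metric.mem_ball.mpr hdisty')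
    set C := cell A Set.univ y' with hCdef
    have hCcc : connectedComponentIn (A.compOn Set.univ) y' = C :=
      connectedComponentIn_eq_cell A _ hy'comp
    have hy'C : y' ∈ C := cell_self hy'comp
    have hCD : C ⊆ D := by
      have hss : C ⊆ connectedComponentIn (A.compOn B) y' := by
        rw [← hCcc]
        exact connectedComponentIn_mono y' (fun w hw i hi => hw i trivial)
      have heq : connectedComponentIn (A.compOn B) y' = D := by
        have hmem : y' ∈ connectedComponentIn (A.compOn B) x := hD ▸ hy'D
        rw [hD, connectedComponentIn_eq hmem]
      rw [← heq]
      exact hss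
    have hCF' : C ∩ 𝓕.F (q - 1) = ∅ := by
      have hsub : C ∩ 𝓕.F (q - 1) ⊆ D ∩ 𝓕.F (q - 1) :=
        Set.inter_subset_inter_left _ hCD
      rw [hDlt (q - 1) (by omega)] at hsub
      exact Set.subset_empty_iff.mp hsub
    have hpcl : p ∈ closure (C ∩ 𝓕.F q) := by
      have htend : Filter.Tendsto (fun s : ℝ => p + s • (y' - p))
          (nhdsWithin (0:ℝ) (Set.Ioi 0)) (nhds p) := by
        have hco : Continuous fun s : ℝ => p + s • (y' - p) :=
          continuous_const.add (continuous_id.smul continuous_const)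
        have h0 : (fun s : ℝ => p + s • (y' - p)) 0 = p := by simp
        exact (hco.tendsto' 0 p h0).mono_left nhdsWithin_le_nhds
      refine mem_closure_of_tendsto htend ?_
      filter_upwards [Ioc_mem_nhdsGT_of_mem (Set.mem_Ico.mpr ⟨le_refl (0:ℝ), zero_lt_one⟩)]
        with s hs
      obtain ⟨hs0, hs1⟩ := hs
      constructor
      · intro i _
        have hval : A.α i (p + s • (y' - p)) = A.α i p + s * (A.α i y' - A.α i p) :=
          affine_comb (A.α i) p y' s
        have hy'0 : A.α i y' ≠ 0 := hy'comp i trivial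
        by_cases hip : A.α i p = 0
        · rw [hval, hip]
          have : (0:ℝ) + s * (A.α i y' - 0) = s * A.α i y' := by ring
          rw [this]
          have : A.α i y' * (s * A.α i y') = s * (A.α i y' * A.α i y') := by ring
          rw [this]
          exact mul_pos hs0 (mul_self_pos.mpr hy'0)
        · have hPy' : 0 < A.α i p * A.α i y' := hy'U i hip
          rw [hval]
          nlinarith [mul_nonneg (by linarith : (0:ℝ) ≤ 1 - s) hPy'.le,
            mul_pos hs0 (mul_self_pos.mpr hy'0)]
      · intro j hj
        rw [affine_comb, hpF j hj, hy'F j hj]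
        ring
    refine ⟨C, ⟨⟨y', hy'comp, hCcc.symm⟩, ⟨y', hy'C, hy'F⟩, Or.inr hCF'⟩, hCD, X,
      ⟨hLX, hdim, p, hXF, hpcl, ?_⟩, ?_⟩
    · intro w hw
      have hsubcl : closure (C ∩ 𝓕.F q) ⊆ KD := by
        rw [← hKDclos]
        apply closure_mono
        rintro w' ⟨hw'C, hw'F⟩
        exact ⟨hw'F, hDcell ▸ (hCD hw'C)⟩
      exact hpmin w (hsubcl hw)
    · intro p' hp'
      refine ⟨?_, ?_⟩
      · show imP z ∈ tau X
        have hpvX : p + v ∈ X := by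
          rw [hXmem]
          intro i hi
          rw [apply_add, hi.2, hi.1]
          ring
        unfold tau
        have hm1 : p ∈ affineSpan ℝ X := subset_affineSpan ℝ X hpX
        have hm2 : p + v ∈ affineSpan ℝ X := subset_affineSpan ℝ X hpvX
        have := AffineSubspace.vsub_mem_direction hm2 hm1
        rw [vsub_eq_sub, add_sub_cancel_left] at this
        exact this
      · intro i hsep hlin
        exact hSep p' (hCD hp'.1) i hsep hlin





end IY
end
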